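/- arXiv:1507.02013 — 2 statements merged into one kernel-verified Lean document; each statement's English description precedes it below -/
import Mathlib

section
/- Let X be a metric space, (Ω, 𝓕) a measurable space, and θ : ℝ → (Ω → Ω) a group of 𝓕-measurable transformations. Let Φ be a multivalued non-autonomous cocycle on X over θ and 𝒟 an inclusion-closed collection of families of nonempty subsets of X. Suppose Φ is 𝒟-pullback asymptotically compact, Φ(t, τ, ω, ·) : X → 2^X is upper semicontinuous for each t ≥ 0, τ ∈ ℝ, ω ∈ Ω, K ∈ 𝒟 is a closed 𝒟-pullback absorbing set of Φ, and for every t ≥ 0 and τ ∈ ℝ the set-valued map ω ↦ Φ(t, τ, ω, K(τ, ω)) is 𝓕-measurable. Then for every τ ∈ ℝ the set-valued map ω ↦ Ω(K)(τ, ω) is 𝓕-measurable. -/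
open Filter Topology Set ENNReal

/-- The image of a set under a multivalued map: `Φ(t, τ, ω, S) = ⋃_{x ∈ S} Φ(t, τ, ω, x)`. -/
def imageSet9 {Ω X : Type*} (Φ : ℝ → ℝ → Ω → X → Set X)
    (t τ : ℝ) (ω : Ω) (S : Set X) : Set X :=
  ⋃ x ∈ S, Φ t τ ω x

/-- The `Ω`-limit set of a family `B`:
`Ω(B)(τ, ω) = ⋂_{r ≥ 0} cl (⋃_{t ≥ r} Φ(t, τ − t, θ_{−t} ω, B(τ − t, θ_{−t} ω)))`. -/
def omegaLimit9 {Ω X : Type*} [MetricSpace X] (Φ : ℝ → ℝ → Ω → X → Set X)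
    (θ : ℝ → Ω → Ω) (B : ℝ → Ω → Set X) (τ : ℝ) (ω : Ω) : Set X :=
  ⋂ (r : ℝ) (_ : 0 ≤ r),
    closure (⋃ (t : ℝ) (_ : r ≤ t),
      imageSet9 Φ t (τ - t) (θ (-t) ω) (B (τ - t) (θ (-t) ω)))

/-- The Hausdorff semidistance `d(A, B) = sup_{a ∈ A} inf_{b ∈ B} d(a, b)` (valued in
`ℝ≥0∞`). -/
noncomputable def hausSemidist9 {X : Type*} [MetricSpace X] (A B : Set X) : ℝ≥0∞ :=
  ⨆ a ∈ A, EMetric.infEdist a B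

/-!
Absorption of `K` by itself and the cocycle property give
`Φ(t + s, τ - t - s, θ_{-t-s} ω, K) ⊆ Φ(t, τ - t, θ_{-t} ω, K)` for all large `s`, so `Ω(K)(τ, ω)`
lies in the closure of each pullback image at an integer time `N`. Writing an open set `O` as a
union of open sets `U m` with `closure (U m) ⊆ O`, asymptotic compactness then turns
`Ω(K)(τ, ω) ∩ O ≠ ∅` into `∃ m, ∀ N, Φ(N, τ - N, θ_{-N} ω, K(τ - N, θ_{-N} ω)) ∩ U m ≠ ∅`,
a countable union of countable intersections of preimages of measurable sets under `θ_{-N}`.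
-/

theorem IsOpen.exists_iUnion_isOpen_closure_subset {X : Type*} [PseudoEMetricSpace X]
    {O : Set X} (hO : IsOpen O) :
    ∃ U : ℕ → Set X, (∀ m, IsOpen (U m)) ∧ (∀ m, closure (U m) ⊆ O) ∧ O ⊆ ⋃ m, U m := by
  refine ⟨fun m => {z | (m : ℝ≥0∞)⁻¹ < Metric.infEDist z Oᶜ},
    fun m => isOpen_lt continuous_const Metric.continuous_infEDist, fun m => ?_, fun x hx => ?_⟩
  · refine (closure_lt_subset_le continuous_const Metric.continuous_infEDist).trans
      fun z hz => ?_
    by_contra hzO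
    rw [mem_ofPred_eq, Metric.infEDist_zero_of_mem (show z ∈ Oᶜ from hzO)] at hz
    exact (ENNReal.inv_pos.2 (ENNReal.natCast_ne_top m)).not_ge hz
  · have hx' : Metric.infEDist x Oᶜ ≠ 0 := by
      rwa [ne_eq, ← Metric.mem_iff_infEDist_zero_of_closed hO.isClosed_compl, notMem_compl_iff]
    simpa using ENNReal.exists_inv_nat_lt hx'

theorem inter_nonempty_iff_exists_forall_inter_nonempty {X : Type*} [TopologicalSpace X]
    {L O : Set X} {A U : ℕ → Set X} (hU : ∀ m, IsOpen (U m)) (hUO : ∀ m, closure (U m) ⊆ O)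
    (hOU : O ⊆ ⋃ m, U m) (hL : ∀ N, L ⊆ closure (A N))
    (hlim : ∀ S : Set X, (∀ N, (A N ∩ S).Nonempty) → (L ∩ closure S).Nonempty) :
    (L ∩ O).Nonempty ↔ ∃ m, ∀ N, (A N ∩ U m).Nonempty := by
  constructor
  · rintro ⟨x, hxL, hxO⟩
    obtain ⟨m, hxm⟩ := mem_iUnion.1 (hOU hxO)
    exact ⟨m, fun N => (closure_inter_open_nonempty_iff (hU m)).1 ⟨x, hL N hxL, hxm⟩⟩
  · rintro ⟨m, hm⟩
    exact (hlim (U m) hm).mono (inter_subset_inter_right L (hUO m))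

def IsCocycle {Ω X : Type*} (θ : ℝ → Ω → Ω) (Φ : ℝ → ℝ → Ω → X → Set X) : Prop :=
  ∀ t s : ℝ, 0 ≤ t → 0 ≤ s → ∀ (τ : ℝ) (ω : Ω) (x : X),
    Φ (t + s) τ ω x = ⋃ y ∈ Φ s τ ω x, Φ t (τ + s) (θ s ω) y

def pullbackImage {Ω X : Type*} (Φ : ℝ → ℝ → Ω → X → Set X) (θ : ℝ → Ω → Ω)
    (B : ℝ → Ω → Set X) (τ t : ℝ) (ω : Ω) : Set X :=
  imageSet9 Φ t (τ - t) (θ (-t) ω) (B (τ - t) (θ (-t) ω))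

section Cocycle

variable {Ω X : Type*} {θ : ℝ → Ω → Ω} {Φ : ℝ → ℝ → Ω → X → Set X}

theorem imageSet9_mono {t τ : ℝ} {ω : Ω} {S S' : Set X} (h : S ⊆ S') :
    imageSet9 Φ t τ ω S ⊆ imageSet9 Φ t τ ω S' :=
  biUnion_subset_biUnion_left h

theorem imageSet9_add (hΦ : IsCocycle θ Φ) {t s : ℝ} (ht : 0 ≤ t) (hs : 0 ≤ s) (τ : ℝ) (ω : Ω)
    (S : Set X) :
    imageSet9 Φ (t + s) τ ω S = imageSet9 Φ t (τ + s) (θ s ω) (imageSet9 Φ s τ ω S) := by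
  ext z
  simp only [imageSet9, hΦ t s ht hs, mem_iUnion, exists_prop]
  constructor
  · rintro ⟨x, hx, y, hy, hz⟩
    exact ⟨y, ⟨x, hx, hy⟩, hz⟩
  · rintro ⟨y, ⟨x, hx, hy⟩, hz⟩
    exact ⟨x, hx, y, hy, hz⟩

theorem pullbackImage_add (hθ : ∀ t s : ℝ, θ (t + s) = θ t ∘ θ s) (hΦ : IsCocycle θ Φ)
    (B : ℝ → Ω → Set X) {t s : ℝ} (ht : 0 ≤ t) (hs : 0 ≤ s) (τ : ℝ) (ω : Ω) :
    pullbackImage Φ θ B τ (t + s) ω =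
      imageSet9 Φ t (τ - t) (θ (-t) ω) (pullbackImage Φ θ B (τ - t) s (θ (-t) ω)) := by
  have hθω : ∀ a b, θ a (θ b ω) = θ (a + b) ω := fun a b => (congrFun (hθ a b) ω).symm
  rw [pullbackImage, pullbackImage, imageSet9_add hΦ ht hs, hθω, hθω,
    show s + -(t + s) = -t by ring, show -s + -t = -(t + s) by ring,
    show τ - (t + s) + s = τ - t by ring, show τ - t - s = τ - (t + s) by ring]

theorem pullbackImage_add_subset (hθ : ∀ t s : ℝ, θ (t + s) = θ t ∘ θ s) (hΦ : IsCocycle θ Φ)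
    {K : ℝ → Ω → Set X} (hKabs : ∀ τ ω, ∀ᶠ s in atTop, pullbackImage Φ θ K τ s ω ⊆ K τ ω)
    {t : ℝ} (ht : 0 ≤ t) (τ : ℝ) (ω : Ω) :
    ∀ᶠ s in atTop, pullbackImage Φ θ K τ (t + s) ω ⊆ pullbackImage Φ θ K τ t ω := by
  filter_upwards [hKabs (τ - t) (θ (-t) ω), eventually_ge_atTop 0] with s hsK hs
  rw [pullbackImage_add hθ hΦ K ht hs]
  exact imageSet9_mono hsK

variable [MetricSpace X]

theorem omegaLimit9_subset_closure_pullbackImage (hθ : ∀ t s : ℝ, θ (t + s) = θ t ∘ θ s)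
    (hΦ : IsCocycle θ Φ)
    {K : ℝ → Ω → Set X} (hKabs : ∀ τ ω, ∀ᶠ s in atTop, pullbackImage Φ θ K τ s ω ⊆ K τ ω)
    {t : ℝ} (ht : 0 ≤ t) (τ : ℝ) (ω : Ω) :
    omegaLimit9 Φ θ K τ ω ⊆ closure (pullbackImage Φ θ K τ t ω) := by
  obtain ⟨T, hT⟩ := eventually_atTop.1 (pullbackImage_add_subset hθ hΦ hKabs ht τ ω)
  intro x hx
  refine closure_mono (iUnion₂_subset fun r hr => ?_)
    (mem_iInter₂.1 hx (t + max T 0) (by positivity))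
  have hr' := hT (r - t) (by linarith [le_max_left T 0])
  rw [add_sub_cancel] at hr'
  exact hr'

theorem mem_omegaLimit9_of_tendsto {B : ℝ → Ω → Set X} {τ : ℝ} {ω : Ω} {t : ℕ → ℝ}
    {x : ℕ → X} {a : X} (ht : Tendsto t atTop atTop)
    (hx : ∀ n, x n ∈ pullbackImage Φ θ B τ (t n) ω) (ha : Tendsto x atTop (𝓝 a)) :
    a ∈ omegaLimit9 Φ θ B τ ω :=
  mem_iInter₂.2 fun r _ => mem_closure_of_tendsto ha <|
    (ht.eventually_ge_atTop r).mono fun n hn => mem_iUnion₂.2 ⟨t n, hn, hx n⟩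

theorem omegaLimit9_inter_closure_nonempty {B : ℝ → Ω → Set X} {τ : ℝ} {ω : Ω}
    (hac : ∀ (t : ℕ → ℝ) (x : ℕ → X), Tendsto t atTop atTop →
      (∀ n, x n ∈ pullbackImage Φ θ B τ (t n) ω) →
      ∃ a : X, ∃ φ : ℕ → ℕ, StrictMono φ ∧ Tendsto (fun k => x (φ k)) atTop (𝓝 a))
    {S : Set X} (hS : ∀ N : ℕ, (pullbackImage Φ θ B τ N ω ∩ S).Nonempty) :
    (omegaLimit9 Φ θ B τ ω ∩ closure S).Nonempty := by
  choose z hzB hzS using hS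
  obtain ⟨a, φ, hφ, ha⟩ := hac (fun n => n) z tendsto_natCast_atTop_atTop hzB
  exact ⟨a, mem_omegaLimit9_of_tendsto (tendsto_natCast_atTop_atTop.comp hφ.tendsto_atTop)
    (fun k => hzB (φ k)) ha, mem_closure_of_tendsto ha (.of_forall fun k => hzS (φ k))⟩

end Cocycle

theorem stmt9_general {Ω X : Type*} [MetricSpace X] [MeasurableSpace Ω]
    (θ : ℝ → Ω → Ω)
    (hθadd : ∀ t s : ℝ, θ (t + s) = θ t ∘ θ s)
    (hθmeas : ∀ t : ℝ, Measurable (θ t))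
    (Φ : ℝ → ℝ → Ω → X → Set X)
    (hΦcoc : ∀ t s : ℝ, 0 ≤ t → 0 ≤ s → ∀ (τ : ℝ) (ω : Ω) (x : X),
      Φ (t + s) τ ω x = ⋃ y ∈ Φ s τ ω x, Φ t (τ + s) (θ s ω) y)
    (𝒟 : Set (ℝ → Ω → Set X))
    (hac : ∀ (τ : ℝ) (ω : Ω), ∀ D ∈ 𝒟, ∀ (t : ℕ → ℝ) (x : ℕ → X),
      Tendsto t atTop atTop →
      (∀ n, x n ∈ imageSet9 Φ (t n) (τ - t n) (θ (-(t n)) ω)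
        (D (τ - t n) (θ (-(t n)) ω))) →
      ∃ a : X, ∃ φ : ℕ → ℕ, StrictMono φ ∧ Tendsto (fun k => x (φ k)) atTop (𝓝 a))
    (K : ℝ → Ω → Set X) (hK𝒟 : K ∈ 𝒟)
    (hKabs : ∀ (τ : ℝ) (ω : Ω), ∀ D ∈ 𝒟, ∃ T > 0, ∀ t : ℝ, T ≤ t →
      imageSet9 Φ t (τ - t) (θ (-t) ω) (D (τ - t) (θ (-t) ω)) ⊆ K τ ω)
    -- `ω ↦ Φ(t, τ, ω, K(τ, ω))` is `𝓕`-measurable: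
    (hΦKmeas : ∀ t : ℝ, 0 ≤ t → ∀ τ : ℝ, ∀ O : Set X, IsOpen O →
      MeasurableSet {ω : Ω | (imageSet9 Φ t τ ω (K τ ω) ∩ O).Nonempty}) :
    ∀ τ : ℝ, ∀ O : Set X, IsOpen O →
      MeasurableSet {ω : Ω | (omegaLimit9 Φ θ K τ ω ∩ O).Nonempty} := by
  intro τ O hO
  have hKabs' : ∀ τ ω, ∀ᶠ s in atTop, pullbackImage Φ θ K τ s ω ⊆ K τ ω := fun τ ω =>
    let ⟨T, _, hT⟩ := hKabs τ ω K hK𝒟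
    eventually_atTop.2 ⟨T, hT⟩
  obtain ⟨U, hUopen, hUO, hOU⟩ := hO.exists_iUnion_isOpen_closure_subset
  have hset : {ω | (omegaLimit9 Φ θ K τ ω ∩ O).Nonempty} = ⋃ m, ⋂ N : ℕ,
      θ (-N) ⁻¹' {ω | (imageSet9 Φ N (τ - N) ω (K (τ - N) ω) ∩ U m).Nonempty} := by
    ext ω
    simp only [mem_iUnion, mem_iInter, mem_preimage, mem_ofPred_eq]
    exact inter_nonempty_iff_exists_forall_inter_nonempty hUopen hUO hOU
      (fun N => omegaLimit9_subset_closure_pullbackImage hθadd hΦcoc hKabs' N.cast_nonneg τ ω)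
      (fun S => omegaLimit9_inter_closure_nonempty (hac τ ω K hK𝒟))
  rw [hset]
  exact .iUnion fun m => .iInter fun N =>
    hθmeas _ (hΦKmeas N N.cast_nonneg _ _ (hUopen m))

/-- If additionally `(Ω, 𝓕)` is a measurable space, the transformations
`θ_t` are measurable, and `ω ↦ Φ(t, τ, ω, K(τ, ω))` is `𝓕`-measurable for every `t ≥ 0`
and `τ ∈ ℝ`, then `ω ↦ Ω(K)(τ, ω)` is `𝓕`-measurable for every `τ ∈ ℝ`. -/
theorem stmt9 {Ω X : Type*} [MetricSpace X] [MeasurableSpace Ω]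
    (θ : ℝ → Ω → Ω) (hθ0 : θ 0 = id)
    (hθadd : ∀ t s : ℝ, θ (t + s) = θ t ∘ θ s)
    (hθmeas : ∀ t : ℝ, Measurable (θ t))
    (Φ : ℝ → ℝ → Ω → X → Set X)
    (hΦ0 : ∀ (τ : ℝ) (ω : Ω) (x : X), Φ 0 τ ω x = {x})
    (hΦne : ∀ t : ℝ, 0 ≤ t → ∀ (τ : ℝ) (ω : Ω) (x : X), (Φ t τ ω x).Nonempty)
    (hΦcl : ∀ t : ℝ, 0 ≤ t → ∀ (τ : ℝ) (ω : Ω) (x : X), IsClosed (Φ t τ ω x))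
    (hΦcoc : ∀ t s : ℝ, 0 ≤ t → 0 ≤ s → ∀ (τ : ℝ) (ω : Ω) (x : X),
      Φ (t + s) τ ω x = ⋃ y ∈ Φ s τ ω x, Φ t (τ + s) (θ s ω) y)
    (𝒟 : Set (ℝ → Ω → Set X))
    (h𝒟ne : ∀ D ∈ 𝒟, ∀ (τ : ℝ) (ω : Ω), (D τ ω).Nonempty)
    (h𝒟inc : ∀ D ∈ 𝒟, ∀ D' : ℝ → Ω → Set X,
      (∀ (τ : ℝ) (ω : Ω), D' τ ω ⊆ D τ ω) → (∀ (τ : ℝ) (ω : Ω), (D' τ ω).Nonempty) →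
      D' ∈ 𝒟)
    (hac : ∀ (τ : ℝ) (ω : Ω), ∀ D ∈ 𝒟, ∀ (t : ℕ → ℝ) (x : ℕ → X),
      Tendsto t atTop atTop →
      (∀ n, x n ∈ imageSet9 Φ (t n) (τ - t n) (θ (-(t n)) ω)
        (D (τ - t n) (θ (-(t n)) ω))) →
      ∃ a : X, ∃ φ : ℕ → ℕ, StrictMono φ ∧ Tendsto (fun k => x (φ k)) atTop (𝓝 a))
    (husc : ∀ t : ℝ, 0 ≤ t → ∀ (τ : ℝ) (ω : Ω) (x : X), ∀ U : Set X, IsOpen U →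
      Φ t τ ω x ⊆ U → ∃ δ > 0, ∀ x' : X, dist x' x < δ → Φ t τ ω x' ⊆ U)
    (K : ℝ → Ω → Set X) (hK𝒟 : K ∈ 𝒟)
    (hKcl : ∀ (τ : ℝ) (ω : Ω), IsClosed (K τ ω))
    (hKabs : ∀ (τ : ℝ) (ω : Ω), ∀ D ∈ 𝒟, ∃ T > 0, ∀ t : ℝ, T ≤ t →
      imageSet9 Φ t (τ - t) (θ (-t) ω) (D (τ - t) (θ (-t) ω)) ⊆ K τ ω)
    -- `ω ↦ Φ(t, τ, ω, K(τ, ω))` is `𝓕`-measurable: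
    (hΦKmeas : ∀ t : ℝ, 0 ≤ t → ∀ τ : ℝ, ∀ O : Set X, IsOpen O →
      MeasurableSet {ω : Ω | (imageSet9 Φ t τ ω (K τ ω) ∩ O).Nonempty}) :
    ∀ τ : ℝ, ∀ O : Set X, IsOpen O →
      MeasurableSet {ω : Ω | (omegaLimit9 Φ θ K τ ω ∩ O).Nonempty} :=
  stmt9_general θ hθadd hθmeas Φ hΦcoc 𝒟 hac K hK𝒟 hKabs hΦKmeas
end

section
/- Let α > 0 and m ∈ ℕ, m ≥ 1. Then Ω_m is a closed subset of Ω = {ω ∈ C(ℝ, ℝ) : ω(0) = 0} with respect to the topology of uniform convergence on compact sets; that is, if ω_n ∈ Ω_m for all n and ω_n → ω uniformly on every compact subset of ℝ with ω ∈ Ω, then ω ∈ Ω_m. -/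
open Filter Topology MeasureTheory

/-- The Wiener shift: `(θ_t ω)(s) = ω(s + t) − ω(t)`. -/
def shiftOU (t : ℝ) (ω : ℝ → ℝ) : ℝ → ℝ := fun s => ω (s + t) - ω t

/-- The random variable `y(ω) = −α ∫_{−∞}^0 e^{ατ} ω(τ) dτ`. -/
noncomputable def yOU (α : ℝ) (ω : ℝ → ℝ) : ℝ :=
  -α * ∫ τ in Set.Iic (0 : ℝ), Real.exp (α * τ) * ω τ

/-- Membership in `Ω_m`: for all `|t| ≥ m`, `|ω(t)| ≤ |t|` and
`|∫_0^t |y(θ_r ω)|² dr| ≤ |t|/α`. -/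
noncomputable def memOmegaM (α : ℝ) (m : ℕ) (ω : ℝ → ℝ) : Prop :=
  ∀ t : ℝ, (m : ℝ) ≤ |t| →
    |ω t| ≤ |t| ∧ |∫ r in (0 : ℝ)..t, (yOU α (shiftOU r ω)) ^ 2| ≤ |t| / α

/-! Everything follows from dominated convergence, twice. Linear growth `|f τ| ≤ |τ| + K` on
`τ ≤ 0` makes `e^{ατ} f(τ)` dominated by `(2/α + K) e^{ατ/2}`, so `y` is continuous along
pointwise convergent families with a common growth constant, and is bounded by `4/α + 2K`.
Uniform convergence on `[-m, m]`, together with `|ωₙ(s)| ≤ |s|` for `|s| ≥ m`, gives such a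
common constant for the shifted paths `θ_r ωₙ`, `|r| ≤ |t|`; hence `∫_0^t y(θ_r ωₙ)² dr`
converges to `∫_0^t y(θ_r ω)² dr` and both defining inequalities of `Ω_m` pass to the limit. -/

open Real Set

lemma abs_mul_exp_mul_le {c x : ℝ} (hc : 0 < c) (hx : x ≤ 0) : |x| * exp (c * x) ≤ 1 / c := by
  have h := mul_exp_neg_le_exp_neg_one (-(c * x))
  rw [neg_neg] at h
  rw [abs_of_nonpos hx, le_div_iff₀ hc]
  nlinarith [exp_le_one_iff.2 (neg_nonpos.2 zero_le_one)]

lemma exp_mul_mul_abs_add_le {α K τ : ℝ} (hα : 0 < α) (hK : 0 ≤ K) (hτ : τ ≤ 0) :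
    exp (α * τ) * (|τ| + K) ≤ (2 / α + K) * exp (α / 2 * τ) := by
  have hsq : exp (α * τ) = exp (α / 2 * τ) * exp (α / 2 * τ) := by
    rw [← exp_add]; ring_nf
  have hlin : |τ| * exp (α / 2 * τ) ≤ 2 / α := by
    simpa using abs_mul_exp_mul_le (half_pos hα) hτ
  have hle_one : exp (α / 2 * τ) ≤ 1 := exp_le_one_iff.2 (by nlinarith)
  have hpos := exp_pos (α / 2 * τ)
  rw [hsq]
  nlinarith [mul_le_mul_of_nonneg_left hlin hpos.le, mul_le_mul_of_nonneg_left hle_one hK]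

section yOU

variable {α K : ℝ}

lemma ae_norm_exp_mul_le_of_abs_le {f : ℝ → ℝ} (hα : 0 < α) (hK : 0 ≤ K)
    (hf : ∀ τ ≤ 0, |f τ| ≤ |τ| + K) :
    ∀ᵐ τ ∂volume.restrict (Iic 0), ‖exp (α * τ) * f τ‖ ≤ (2 / α + K) * exp (α / 2 * τ) := by
  filter_upwards [ae_restrict_mem measurableSet_Iic] with τ hτ
  rw [norm_mul, norm_of_nonneg (exp_pos _).le, Real.norm_eq_abs]
  exact (mul_le_mul_of_nonneg_left (hf τ hτ) (exp_pos _).le).trans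
    (exp_mul_mul_abs_add_le hα hK hτ)

lemma abs_yOU_le {f : ℝ → ℝ} (hα : 0 < α) (hK : 0 ≤ K) (hf : ∀ τ ≤ 0, |f τ| ≤ |τ| + K) :
    |yOU α f| ≤ 4 / α + 2 * K := by
  have hint : ‖∫ τ in Iic 0, exp (α * τ) * f τ‖ ≤ (2 / α + K) * (2 / α) := by
    refine (norm_integral_le_of_norm_le ((integrableOn_exp_mul_Iic (half_pos hα) 0).const_mul _)
      (ae_norm_exp_mul_le_of_abs_le hα hK hf)).trans_eq ?_
    rw [integral_const_mul, integral_exp_mul_Iic (half_pos hα)]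
    field_simp
    simp
  rw [yOU, abs_mul, abs_neg, abs_of_pos hα, ← Real.norm_eq_abs]
  calc α * ‖∫ τ in Iic 0, exp (α * τ) * f τ‖ ≤ α * ((2 / α + K) * (2 / α)) := by gcongr
    _ = 4 / α + 2 * K := by field_simp; ring

lemma tendsto_yOU {ι : Type*} {l : Filter ι} [l.IsCountablyGenerated] {f : ι → ℝ → ℝ}
    {f₀ : ℝ → ℝ} (hα : 0 < α) (hK : 0 ≤ K)
    (hmeas : ∀ᶠ i in l, AEStronglyMeasurable (f i) (volume.restrict (Iic 0)))
    (hf : ∀ᶠ i in l, ∀ τ ≤ 0, |f i τ| ≤ |τ| + K)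
    (hlim : ∀ τ ≤ 0, Tendsto (fun i => f i τ) l (𝓝 (f₀ τ))) :
    Tendsto (fun i => yOU α (f i)) l (𝓝 (yOU α f₀)) := by
  refine Tendsto.const_mul _ <| tendsto_integral_filter_of_dominated_convergence _ ?_ ?_
    ((integrableOn_exp_mul_Iic (half_pos hα) 0).const_mul (2 / α + K)) ?_
  · filter_upwards [hmeas] with i hi
    exact (continuous_exp.comp (continuous_const_mul α)).aestronglyMeasurable.mul hi
  · filter_upwards [hf] with i hi using ae_norm_exp_mul_le_of_abs_le hα hK hi
  · filter_upwards [ae_restrict_mem measurableSet_Iic] with τ hτ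
    exact (hlim τ hτ).const_mul _

end yOU

section shiftOU

variable {α C : ℝ} {ω : ℝ → ℝ}

lemma abs_shiftOU_le (hω : ∀ s, |ω s| ≤ |s| + C) (r τ : ℝ) :
    |shiftOU r ω τ| ≤ |τ| + (2 * |r| + 2 * C) := by
  have := hω (τ + r)
  have := hω r
  have := abs_add_le τ r
  have := abs_sub (ω (τ + r)) (ω r)
  simp only [shiftOU]
  linarith

lemma continuous_yOU_shiftOU (hα : 0 < α) (hC : 0 ≤ C) (hcont : Continuous ω)
    (hω : ∀ s, |ω s| ≤ |s| + C) : Continuous fun r => yOU α (shiftOU r ω) := by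
  refine continuous_iff_continuousAt.2 fun r₀ => ?_
  have hnear : ∀ᶠ r in 𝓝 r₀, |r| < |r₀| + 1 :=
    (continuous_abs.tendsto r₀).eventually (gt_mem_nhds (lt_add_one _))
  refine tendsto_yOU (K := 2 * (|r₀| + 1) + 2 * C) hα (by positivity)
    (Eventually.of_forall fun r => (by unfold shiftOU; fun_prop : Continuous (shiftOU r ω))
      |>.aestronglyMeasurable) ?_ fun τ _ => ?_
  · filter_upwards [hnear] with r hr τ _
    linarith [abs_shiftOU_le hω r τ]
  · exact ((by fun_prop : Continuous fun r => ω (τ + r) - ω r)).tendsto r₀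

end shiftOU

lemma exists_eventually_abs_le_abs_add {ι : Type*} {l : Filter ι} {ω : ι → ℝ → ℝ}
    {ω₀ : ℝ → ℝ} {a : ℝ} (hout : ∀ᶠ i in l, ∀ s, a ≤ |s| → |ω i s| ≤ |s|)
    (hcont₀ : ContinuousOn ω₀ (Icc (-a) a)) (hunif : TendstoUniformlyOn ω ω₀ l (Icc (-a) a)) :
    ∃ C, 0 ≤ C ∧ ∀ᶠ i in l, ∀ s, |ω i s| ≤ |s| + C := by
  obtain ⟨C₀, hC₀⟩ := isCompact_Icc.exists_bound_of_continuousOn hcont₀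
  refine ⟨max C₀ 0 + 1, by positivity, ?_⟩
  filter_upwards [hout, Metric.tendstoUniformlyOn_iff.1 hunif 1 one_pos] with i hi hclose s
  by_cases hs : a ≤ |s|
  · linarith [hi s hs, le_max_right C₀ 0]
  · have hmem : s ∈ Icc (-a) a := abs_le.1 (not_le.1 hs).le
    have := hC₀ s hmem
    have := hclose s hmem
    rw [Real.dist_eq] at this
    have := abs_sub_abs_le_abs_sub (ω i s) (ω₀ s)
    rw [Real.norm_eq_abs] at *
    linarith [abs_sub_comm (ω₀ s) (ω i s), le_max_left C₀ 0, abs_nonneg s]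

lemma tendsto_intervalIntegral_sq_yOU_shiftOU {ι : Type*} {l : Filter ι}
    [l.IsCountablyGenerated] {α C : ℝ} {ω : ι → ℝ → ℝ} {ω₀ : ℝ → ℝ} (hα : 0 < α) (hC : 0 ≤ C)
    (hcont : ∀ i, Continuous (ω i)) (hω : ∀ᶠ i in l, ∀ s, |ω i s| ≤ |s| + C)
    (hlim : ∀ s, Tendsto (fun i => ω i s) l (𝓝 (ω₀ s))) (t : ℝ) :
    Tendsto (fun i => ∫ r in (0 : ℝ)..t, yOU α (shiftOU r (ω i)) ^ 2) l
      (𝓝 (∫ r in (0 : ℝ)..t, yOU α (shiftOU r ω₀) ^ 2)) := by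
  refine intervalIntegral.tendsto_integral_filter_of_dominated_convergence
    (fun _ => (4 / α + 2 * (2 * |t| + 2 * C)) ^ 2) ?_ ?_ intervalIntegrable_const ?_
  · filter_upwards [hω] with i hi
    exact ((continuous_yOU_shiftOU hα hC (hcont i) hi).pow 2).aestronglyMeasurable
  · filter_upwards [hω] with i hi
    refine Eventually.of_forall fun r hr => ?_
    have hrt : |r| ≤ |t| := by simpa using abs_sub_left_of_mem_uIcc (uIoc_subset_uIcc hr)
    rw [Real.norm_eq_abs, abs_pow]
    refine pow_le_pow_left₀ (abs_nonneg _) ((abs_yOU_le hα (by positivity) fun τ _ =>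
      abs_shiftOU_le hi r τ).trans ?_) 2
    linarith
  · refine Eventually.of_forall fun r _ => (Tendsto.pow ?_ 2)
    refine tendsto_yOU (K := 2 * |r| + 2 * C) hα (by positivity)
      (Eventually.of_forall fun i => ?_) ?_ fun τ _ => (hlim (τ + r)).sub (hlim r)
    · exact (by unfold shiftOU; fun_prop : Continuous (shiftOU r (ω i))).aestronglyMeasurable
    · filter_upwards [hω] with i hi τ _ using abs_shiftOU_le hi r τ

theorem stmt13_general (α : ℝ) (hα : 0 < α) (m : ℕ)
    (ω : ℕ → ℝ → ℝ) (ω₀ : ℝ → ℝ)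
    (hcont : ∀ n, Continuous (ω n)) (hcont₀ : Continuous ω₀)
    (hmem : ∀ n, memOmegaM α m (ω n))
    (hconv : ∀ K : Set ℝ, IsCompact K → TendstoUniformlyOn (fun n => ω n) ω₀ atTop K) :
    memOmegaM α m ω₀ := by
  have hlim : ∀ s, Tendsto (fun n => ω n s) atTop (𝓝 (ω₀ s)) := fun s =>
    (hconv {s} isCompact_singleton).tendsto_at rfl
  obtain ⟨C, hC, hω⟩ := exists_eventually_abs_le_abs_add
    (Eventually.of_forall fun n s hs => (hmem n s hs).1) hcont₀.continuousOn
    (hconv _ isCompact_Icc)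
  intro t ht
  exact ⟨le_of_tendsto (hlim t).abs (Eventually.of_forall fun n => (hmem n t ht).1),
    le_of_tendsto (tendsto_intervalIntegral_sq_yOU_shiftOU hα hC hcont hω hlim t).abs
      (Eventually.of_forall fun n => (hmem n t ht).2)⟩

/-- `Ω_m` is sequentially closed in the topology of uniform convergence
on compact sets: if `ωₙ ∈ Ω_m` for all `n` and `ωₙ → ω` uniformly on every compact subset
of `ℝ`, where `ω` is continuous with `ω(0) = 0`, then `ω ∈ Ω_m`. -/
theorem stmt13 (α : ℝ) (hα : 0 < α) (m : ℕ) (hm : 1 ≤ m)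
    (ω : ℕ → ℝ → ℝ) (ω₀ : ℝ → ℝ)
    (hcont : ∀ n, Continuous (ω n)) (hcont₀ : Continuous ω₀)
    (hzero : ∀ n, ω n 0 = 0) (hzero₀ : ω₀ 0 = 0)
    (hmem : ∀ n, memOmegaM α m (ω n))
    (hconv : ∀ K : Set ℝ, IsCompact K → TendstoUniformlyOn (fun n => ω n) ω₀ atTop K) :
    memOmegaM α m ω₀ :=
  stmt13_general α hα m ω ω₀ hcont hcont₀ hmem hconv
end
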